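/- Let μ be a probability measure on Ω, let Xᵢ, Xⱼ be Boolean sensitivity indicators with μ(Xᵢ = a ∧ Xⱼ = b) > 0 for all a, b ∈ {0,1}, and let Mᵢ be the release indicator produced by the OSDPRR mechanism with parameter εᵢ > 0 for Xᵢ, with Mᵢ conditionally independent of Xⱼ given Xᵢ. Set δ₁ = P(Xᵢ = 0 | Xⱼ = 0) and δ₂ = P(Xᵢ = 0 | Xⱼ = 1). Then μ(Mᵢ = 1) > 0 and P(Xⱼ = 0 | Mᵢ = 1) / P(Xⱼ = 1 | Mᵢ = 1) = [(1 − δ₁)/(1 − δ₂)] · μ(Xⱼ = 0) / μ(Xⱼ = 1). -/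

import Mathlib

open MeasureTheory Real

/-!
A sensitive record is never released, so `{Mᵢ = 1}` lies in `{Xᵢ = 1}` up to a null set, and
conditional independence then gives `μ(Mᵢ = 1, Xⱼ = b) = (1 - e^{-εᵢ}) μ(Xᵢ = 1, Xⱼ = b)`.
Hence the posterior odds of `Xⱼ` equal `μ(Xᵢ = 1, Xⱼ = 0) / μ(Xᵢ = 1, Xⱼ = 1)`, and so does the
right-hand side, because `1 - δ_b = P(Xᵢ = 1 | Xⱼ = b)`.
-/

/-- Conditional probability `P(A | B) = μ(A ∩ B) / μ(B)`, as a real number. -/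
noncomputable def condProb {Ω : Type*} [MeasurableSpace Ω] (μ : Measure Ω) (A B : Set Ω) : ℝ :=
  (μ (A ∩ B)).toReal / (μ B).toReal

section ConditionalProbability

variable {Ω : Type*} [MeasurableSpace Ω] {μ : Measure Ω}

theorem condProb_div_condProb (A A' : Set Ω) {B : Set Ω} (hB : (μ B).toReal ≠ 0) :
    condProb μ A B / condProb μ A' B = (μ (A ∩ B)).toReal / (μ (A' ∩ B)).toReal :=
  div_div_div_cancel_right₀ hB _ _

theorem condProb_compl [IsFiniteMeasure μ] {A : Set Ω} (hA : MeasurableSet A) {B : Set Ω}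
    (hB : (μ B).toReal ≠ 0) : condProb μ Aᶜ B = 1 - condProb μ A B := by
  have hsplit : (μ (A ∩ B)).toReal + (μ (Aᶜ ∩ B)).toReal = (μ B).toReal := by
    rw [← ENNReal.toReal_add (measure_ne_top _ _) (measure_ne_top _ _), Set.inter_comm A,
      Set.inter_comm Aᶜ, ← Set.sdiff_eq, measure_inter_add_sdiff B hA]
  unfold condProb
  field_simp
  linarith

theorem measure_inter_eq_of_inter_compl_null {R S : Set Ω} (h : μ (R ∩ Sᶜ) = 0) (T : Set Ω) :
    μ (T ∩ R) = μ (R ∩ (S ∩ T)) := by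
  refine measure_congr ?_
  filter_upwards [ae_le_set.2 h] with ω hω
  exact propext ⟨fun ⟨hT, hR⟩ => ⟨hR, hω hR, hT⟩, fun ⟨hR, _, hT⟩ => ⟨hT, hR⟩⟩

theorem measure_inter_toReal_of_condIndep {M S T : Set Ω} {c : ℝ} (hS : (μ S).toReal ≠ 0)
    (hind : μ (M ∩ (S ∩ T)) * μ S = μ (M ∩ S) * μ (S ∩ T))
    (hM : (μ (M ∩ S)).toReal = c * (μ S).toReal) :
    (μ (M ∩ (S ∩ T))).toReal = c * (μ (S ∩ T)).toReal := by
  refine mul_right_cancel₀ hS ?_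
  rw [← ENNReal.toReal_mul, hind, ENNReal.toReal_mul, hM]
  ring

end ConditionalProbability

theorem osdprr_dependent_leakage_released_general {Ω : Type*} [MeasurableSpace Ω]
    (μ : Measure Ω) [IsProbabilityMeasure μ]
    (Xi Xj Mi : Ω → Bool)
    (hXi : Measurable Xi)
    (εi : ℝ) (hεi : 0 < εi)
    (hpos : ∀ a b : Bool, 0 < μ {ω | Xi ω = a ∧ Xj ω = b})
    -- OSDPRR for Xᵢ: a sensitive record is never released
    (hrel0 : μ {ω | Mi ω = true ∧ Xi ω = false} = 0)
    -- OSDPRR for Xᵢ: a non-sensitive record is released with probability 1 - e^{-εᵢ}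
    (hrel1 : (μ {ω | Mi ω = true ∧ Xi ω = true}).toReal
        = (1 - Real.exp (-εi)) * (μ {ω | Xi ω = true}).toReal)
    -- conditional independence of Mᵢ and Xⱼ given Xᵢ
    (hCI : ∀ m a b : Bool,
      μ {ω | Mi ω = m ∧ Xi ω = a ∧ Xj ω = b} * μ {ω | Xi ω = a}
        = μ {ω | Mi ω = m ∧ Xi ω = a} * μ {ω | Xi ω = a ∧ Xj ω = b}) :
    0 < μ {ω | Mi ω = true} ∧
      condProb μ {ω | Xj ω = false} {ω | Mi ω = true}
          / condProb μ {ω | Xj ω = true} {ω | Mi ω = true}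
        = ((1 - condProb μ {ω | Xi ω = false} {ω | Xj ω = false})
            / (1 - condProb μ {ω | Xi ω = false} {ω | Xj ω = true}))
          * ((μ {ω | Xj ω = false}).toReal / (μ {ω | Xj ω = true}).toReal) := by
  set M := {ω | Mi ω = true}
  set S := {ω | Xi ω = true}
  have hSc : {ω | Xi ω = false} = Sᶜ := by ext ω; simp [S]
  have hc : 0 < 1 - exp (-εi) := sub_pos.2 (Real.exp_lt_one_iff.2 (neg_neg_of_pos hεi))
  have hST : ∀ b, 0 < (μ (S ∩ {ω | Xj ω = b})).toReal := fun b =>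
    ENNReal.toReal_pos (hpos true b).ne' (measure_ne_top _ _)
  have hS : 0 < (μ S).toReal := (hST true).trans_le (measureReal_mono Set.inter_subset_left)
  have hT : ∀ b, (μ {ω | Xj ω = b}).toReal ≠ 0 := fun b =>
    ((hST b).trans_le (measureReal_mono Set.inter_subset_right)).ne'
  have hMS : 0 < (μ (M ∩ S)).toReal := (mul_pos hc hS).trans_eq hrel1.symm
  have hM : 0 < μ M :=
    (ENNReal.toReal_pos_iff.1 hMS).1.trans_le (measure_mono Set.inter_subset_left)
  have hjoint : ∀ b, (μ ({ω | Xj ω = b} ∩ M)).toReal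
      = (1 - exp (-εi)) * (μ (S ∩ {ω | Xj ω = b})).toReal := by
    intro b
    rw [measure_inter_eq_of_inter_compl_null (by rwa [← hSc]) _]
    exact measure_inter_toReal_of_condIndep hS.ne' (hCI true true b) hrel1
  refine ⟨hM, ?_⟩
  have hS_meas : MeasurableSet S := hXi (measurableSet_singleton true)
  rw [condProb_div_condProb _ _ (ENNReal.toReal_pos hM.ne' (measure_ne_top _ _)).ne', hjoint,
    hjoint, hSc, condProb_compl hS_meas (hT false), condProb_compl hS_meas (hT true),
    sub_sub_cancel, sub_sub_cancel]
  unfold condProb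
  field_simp [hT false, hT true, (hST true).ne']

/-- **Theorem 3, record released.** With `δ₁ = P(Xᵢ = 0 | Xⱼ = 0)` and
`δ₂ = P(Xᵢ = 0 | Xⱼ = 1)`, if record `rᵢ` is released under OSDPRR with parameter `εᵢ`, then
the event `Mᵢ = 1` has positive probability and
`P(Xⱼ=0 | Mᵢ=1) / P(Xⱼ=1 | Mᵢ=1) = [(1−δ₁)/(1−δ₂)] · P(Xⱼ=0)/P(Xⱼ=1)`. -/
theorem osdprr_dependent_leakage_released {Ω : Type*} [MeasurableSpace Ω]
    (μ : Measure Ω) [IsProbabilityMeasure μ]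
    (Xi Xj Mi : Ω → Bool)
    (hXi : Measurable Xi) (hXj : Measurable Xj) (hMi : Measurable Mi)
    (εi : ℝ) (hεi : 0 < εi)
    (hpos : ∀ a b : Bool, 0 < μ {ω | Xi ω = a ∧ Xj ω = b})
    -- OSDPRR for Xᵢ: a sensitive record is never released
    (hrel0 : μ {ω | Mi ω = true ∧ Xi ω = false} = 0)
    -- OSDPRR for Xᵢ: a non-sensitive record is released with probability 1 - e^{-εᵢ}
    (hrel1 : (μ {ω | Mi ω = true ∧ Xi ω = true}).toReal
        = (1 - Real.exp (-εi)) * (μ {ω | Xi ω = true}).toReal)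
    -- conditional independence of Mᵢ and Xⱼ given Xᵢ
    (hCI : ∀ m a b : Bool,
      μ {ω | Mi ω = m ∧ Xi ω = a ∧ Xj ω = b} * μ {ω | Xi ω = a}
        = μ {ω | Mi ω = m ∧ Xi ω = a} * μ {ω | Xi ω = a ∧ Xj ω = b}) :
    0 < μ {ω | Mi ω = true} ∧
      condProb μ {ω | Xj ω = false} {ω | Mi ω = true}
          / condProb μ {ω | Xj ω = true} {ω | Mi ω = true}
        = ((1 - condProb μ {ω | Xi ω = false} {ω | Xj ω = false})
            / (1 - condProb μ {ω | Xi ω = false} {ω | Xj ω = true}))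
          * ((μ {ω | Xj ω = false}).toReal / (μ {ω | Xj ω = true}).toReal) :=
  osdprr_dependent_leakage_released_general μ Xi Xj Mi hXi εi hεi hpos hrel0 hrel1 hCI
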